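/- Let p be a prime and let a ≥ 1 be an integer. Then ρ(ap, p) = ρ(ap+1, p) = ⋯ = ρ(ap + (p−1), p); that is, ρ(ap + i, p) = ρ(ap, p) for all integers 0 ≤ i ≤ p−1. -/

import Mathlib

/-
Splitting off the cycle through a fixed point, a permutation of `n + 1` points of order coprime
to `m` is a cycle of length `l + 1` coprime to `m`, one of `n! / (n - l)!` such cycles, together
with a permutation of the other `n - l` points of order coprime to `m`. Hence
`(n + 1) ρ(n + 1) = ∑_{l ≤ n, (l + 1, m) = 1} ρ(n - l)`.
For `m = p` prime and `p ∤ n + 2`, the terms with `p ∣ l + 1` are unchanged from `n` to `n + 1`,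
because then `p ∤ n - l + 1` and, inductively, `ρ(n - l + 1) = ρ(n - l)`. Subtracting the two
recurrences leaves `(n + 2) ρ(n + 2) - (n + 1) ρ(n + 1) = ρ(n + 1)`, so `ρ` is constant on each
block `ap, ap + 1, …, ap + p - 1`.
-/

/-- `rho n m` is the proportion of permutations in `Sym(n)` whose order is coprime to `m`. -/
noncomputable def rho (n m : ℕ) : ℝ :=
  (Finset.univ.filter (fun π : Equiv.Perm (Fin n) => Nat.Coprime (orderOf π) m)).card /
    (Nat.factorial n : ℝ)

open Equiv Equiv.Perm Finset

theorem Nat.coprime_lcm_iff_left {a b m : ℕ} :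
    (Nat.lcm a b).Coprime m ↔ a.Coprime m ∧ b.Coprime m :=
  ⟨fun h => ⟨h.coprime_dvd_left (Nat.dvd_lcm_left a b),
      h.coprime_dvd_left (Nat.dvd_lcm_right a b)⟩,
    fun ⟨ha, hb⟩ => (ha.mul_left hb).coprime_dvd_left (Nat.lcm_dvd_mul a b)⟩

noncomputable def coprimeOrderCount (m : ℕ) (α : Type*) [Fintype α] [DecidableEq α] : ℕ :=
  #{σ : Perm α | (orderOf σ).Coprime m}

theorem rho_eq_coprimeOrderCount_div (n m : ℕ) :
    rho n m = coprimeOrderCount m (Fin n) / n.factorial := rfl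

theorem coprimeOrderCount_eq_of_card_eq (m : ℕ) {α β : Type*} [Fintype α] [DecidableEq α]
    [Fintype β] [DecidableEq β] (h : Fintype.card α = Fintype.card β) :
    coprimeOrderCount m α = coprimeOrderCount m β :=
  let e := (Fintype.equivOfCardEq h).permCongrHom
  card_equiv e.toEquiv fun σ => by
    simp only [mem_filter, mem_univ, true_and]
    exact iff_of_eq (congrArg (·.Coprime m) (e.orderOf_eq σ).symm)

namespace Equiv.Perm

variable {α : Type*} [Fintype α] [DecidableEq α] {c σ : Perm α} {x : α}

theorem cycleOf_eq_self_iff : c.cycleOf x = c ↔ c = 1 ∨ c.IsCycle ∧ x ∈ c.support := by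
  constructor
  · intro hc
    by_cases hx : c x = x
    · rw [← hc]
      exact .inl ((cycleOf_eq_one_iff c).2 hx)
    · exact .inr ⟨hc ▸ isCycle_cycleOf c hx, mem_support.2 hx⟩
  · rintro (rfl | ⟨hc, hx⟩)
    · exact cycleOf_one x
    · exact hc.cycleOf_eq (mem_support.1 hx)

theorem cycleOf_cycleOf (σ : Perm α) (x : α) : (σ.cycleOf x).cycleOf x = σ.cycleOf x := by
  rw [cycleOf_eq_self_iff]
  by_cases hx : σ x = x
  · exact .inl ((cycleOf_eq_one_iff σ).2 hx)
  · exact .inr ⟨isCycle_cycleOf σ hx,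
      mem_support_cycleOf_iff.2 ⟨.refl σ x, mem_support.2 hx⟩⟩

-- When `c.cycleOf x = c`, `insert x c.support` is the `c`-orbit of `x`, also if `c = 1`.
theorem orderOf_eq_card_insert_support (hc : c.cycleOf x = c) :
    orderOf c = #(insert x c.support) := by
  rcases cycleOf_eq_self_iff.1 hc with rfl | ⟨hcyc, hx⟩
  · simp
  · rw [hcyc.orderOf, insert_eq_of_mem hx]

theorem sameCycle_of_mem_insert_support_cycleOf {y : α}
    (hy : y ∈ insert x (σ.cycleOf x).support) : σ.SameCycle x y := by
  rcases mem_insert.1 hy with rfl | hy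
  · exact .refl σ y
  · exact (mem_support_cycleOf_iff.1 hy).1

theorem disjoint_ofSubtype_notMem_insert_support (τ : Perm {y // y ∉ insert x c.support}) :
    Disjoint c (ofSubtype τ) := by
  intro y
  by_cases hy : y ∈ insert x c.support
  · exact .inr (ofSubtype_apply_of_not_mem τ (not_not.2 hy))
  · exact .inl (notMem_support.1 fun h => hy (mem_insert_of_mem h))

theorem cycleOf_mul_ofSubtype (hc : c.cycleOf x = c) (τ : Perm {y // y ∉ insert x c.support}) :
    (c * ofSubtype τ).cycleOf x = c := by
  rw [(disjoint_ofSubtype_notMem_insert_support τ).cycleOf_mul_distrib, hc,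
    (cycleOf_eq_one_iff _).2 (ofSubtype_apply_of_not_mem τ (not_not.2 (mem_insert_self x _))),
    mul_one]

theorem orderOf_mul_ofSubtype (hc : c.cycleOf x = c) (τ : Perm {y // y ∉ insert x c.support}) :
    orderOf (c * ofSubtype τ) = Nat.lcm #(insert x c.support) (orderOf τ) := by
  rw [(disjoint_ofSubtype_notMem_insert_support τ).orderOf, orderOf_eq_card_insert_support hc,
    orderOf_injective ofSubtype ofSubtype_injective τ]

theorem exists_eq_mul_ofSubtype (hσ : σ.cycleOf x = c) :
    ∃ τ : Perm {y // y ∉ insert x c.support}, σ = c * ofSubtype τ := by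
  have hfix : ∀ y, ¬ y ∉ insert x c.support → (c⁻¹ * σ) y = y := by
    intro y hy
    rw [not_not, ← hσ] at hy
    rw [mul_apply, ← (sameCycle_of_mem_insert_support_cycleOf hy).cycleOf_apply, hσ]
    exact c.symm_apply_apply y
  refine ⟨(Perm.subtypeEquivSubtypePerm _).symm ⟨c⁻¹ * σ, hfix⟩, ?_⟩
  have h := congrArg Subtype.val
    ((Perm.subtypeEquivSubtypePerm _).apply_symm_apply ⟨c⁻¹ * σ, hfix⟩)
  rw [Perm.subtypeEquivSubtypePerm_apply_coe] at h
  rw [h, mul_inv_cancel_left]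

theorem card_coprime_cycleOf_eq (m : ℕ) (hc : c.cycleOf x = c) :
    #{σ : Perm α | (orderOf σ).Coprime m ∧ σ.cycleOf x = c} =
      if (#(insert x c.support)).Coprime m then
        coprimeOrderCount m {y // y ∉ insert x c.support} else 0 := by
  have hinj :
      Function.Injective fun τ : Perm {y // y ∉ insert x c.support} => c * ofSubtype τ :=
    (mul_right_injective c).comp ofSubtype_injective
  have hfiber : ({σ | (orderOf σ).Coprime m ∧ σ.cycleOf x = c} : Finset (Perm α)) =
      ({τ | (Nat.lcm #(insert x c.support) (orderOf τ)).Coprime m} : Finset _).map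
        ⟨_, hinj⟩ := by
    ext σ
    simp only [mem_filter, mem_univ, true_and, mem_map, Function.Embedding.coeFn_mk]
    constructor
    · rintro ⟨hcop, hσ⟩
      obtain ⟨τ, rfl⟩ := exists_eq_mul_ofSubtype hσ
      exact ⟨τ, by rwa [← orderOf_mul_ofSubtype hc], rfl⟩
    · rintro ⟨τ, hτ, rfl⟩
      exact ⟨by rwa [orderOf_mul_ofSubtype hc], cycleOf_mul_ofSubtype hc τ⟩
  rw [hfiber, card_map]
  simp_rw [Nat.coprime_lcm_iff_left]
  split_ifs with h
  · exact congrArg card (filter_congr fun τ _ => and_iff_right h)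
  · rw [Finset.card_eq_zero, filter_eq_empty_iff]
    exact fun _ _ hτ => h hτ.1

theorem card_cycleType_singleton_mem_support_eq (k : ℕ) (x y : α) :
    #{c : Perm α | c.cycleType = {k} ∧ x ∈ c.support} =
      #{c : Perm α | c.cycleType = {k} ∧ y ∈ c.support} := by
  refine card_equiv (MulAut.conj (swap x y)).toEquiv fun c => ?_
  simp only [mem_filter, mem_univ, true_and]
  rw [show (MulAut.conj (swap x y)).toEquiv c = swap x y * c * (swap x y)⁻¹
    from rfl, cycleType_conj, support_conj, mem_map_equiv, symm_swap, swap_apply_right]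

theorem card_cycleType_singleton_mem_support (x : α) {k : ℕ} (hk : 2 ≤ k)
    (hkα : k ≤ Fintype.card α) :
    #{c : Perm α | c.cycleType = {k} ∧ x ∈ c.support} =
      (Fintype.card α - 1).descFactorial (k - 1) := by
  -- Double count the pairs `(y, c)` with `y ∈ c.support`; by conjugation every `y` lies in
  -- equally many `k`-cycles.
  have hdouble : Fintype.card α * #{c : Perm α | c.cycleType = {k} ∧ x ∈ c.support} =
      #{c : Perm α | c.cycleType = {k}} * k := by
    calc Fintype.card α * #{c : Perm α | c.cycleType = {k} ∧ x ∈ c.support}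
        = ∑ y, #{c : Perm α | c.cycleType = {k} ∧ y ∈ c.support} := by
          rw [sum_congr rfl fun y _ => card_cycleType_singleton_mem_support_eq k y x, sum_const,
            card_univ, smul_eq_mul]
      _ = ∑ c ∈ {c : Perm α | c.cycleType = {k}}, #c.support := by
          have := sum_card_bipartiteAbove_eq_sum_card_bipartiteBelow (s := univ)
              (t := {c : Perm α | c.cycleType = {k}}) (fun y (c : Perm α) => y ∈ c.support)
          simpa only [bipartiteAbove, bipartiteBelow, filter_filter, filter_univ_mem] using this
      _ = #{c : Perm α | c.cycleType = {k}} * k := by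
          rw [sum_const_nat fun c hc => by rw [← sum_cycleType, (mem_filter.1 hc).2,
            Multiset.sum_singleton]]
  obtain ⟨n, hn⟩ : ∃ n, Fintype.card α = n + 1 := ⟨Fintype.card α - 1, by omega⟩
  obtain ⟨l, rfl⟩ : ∃ l, k = l + 1 := ⟨k - 1, by omega⟩
  rw [card_of_cycleType_singleton hk hkα, hn] at hdouble
  rw [hn, Nat.add_sub_cancel, Nat.add_sub_cancel]
  refine Nat.eq_of_mul_eq_mul_left n.succ_pos ?_
  rw [hdouble, ← Nat.succ_descFactorial_succ, Nat.descFactorial_eq_factorial_mul_choose,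
    Nat.factorial_succ, Nat.add_sub_cancel]
  ring

theorem card_cycleOf_eq_self_card_insert_support (x : α) {l : ℕ} (hl : l < Fintype.card α) :
    #{c : Perm α | c.cycleOf x = c ∧ #(insert x c.support) = l + 1} =
      (Fintype.card α - 1).descFactorial l := by
  rcases Nat.eq_zero_or_pos l with rfl | hl0
  · rw [Nat.descFactorial_zero, card_eq_one]
    refine ⟨1, eq_singleton_iff_unique_mem.2 ⟨by simp, fun c hc => ?_⟩⟩
    simp only [mem_filter, mem_univ, true_and, cycleOf_eq_self_iff] at hc
    obtain ⟨rfl | ⟨hcyc, hx⟩, hcard⟩ := hc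
    · rfl
    · have := hcyc.two_le_card_support
      rw [insert_eq_of_mem hx] at hcard
      omega
  · have h := card_cycleType_singleton_mem_support x (k := l + 1) (by omega) (by omega)
    rw [Nat.add_sub_cancel] at h
    rw [← h]
    congr 1
    ext c
    simp only [mem_filter, mem_univ, true_and, cycleOf_eq_self_iff]
    constructor
    · rintro ⟨rfl | ⟨hcyc, hx⟩, hcard⟩
      · simp at hcard
        omega
      · rw [insert_eq_of_mem hx] at hcard
        exact ⟨hcard ▸ hcyc.cycleType, hx⟩
    · rintro ⟨htype, hx⟩
      have hcyc : c.IsCycle := card_cycleType_eq_one.1 (by rw [htype]; rfl)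
      refine ⟨.inr ⟨hcyc, hx⟩, ?_⟩
      rw [insert_eq_of_mem hx, ← sum_cycleType, htype, Multiset.sum_singleton]

end Equiv.Perm

theorem coprimeOrderCount_eq_sum (m : ℕ) (α : Type*) [Fintype α] [DecidableEq α]
    [Nonempty α] :
    coprimeOrderCount m α = ∑ l ∈ range (Fintype.card α), if (l + 1).Coprime m then
      (Fintype.card α - 1).descFactorial l *
        coprimeOrderCount m (Fin (Fintype.card α - (l + 1))) else 0 := by
  obtain ⟨x⟩ := ‹Nonempty α›
  set K : Finset (Perm α) := {c | c.cycleOf x = c}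
  set g : Perm α → ℕ := fun c =>
    if (#(insert x c.support)).Coprime m then
      coprimeOrderCount m (Fin (Fintype.card α - #(insert x c.support))) else 0
  have hlen : ∀ c ∈ K, #(insert x c.support) - 1 ∈ range (Fintype.card α) := fun c _ => by
    have := card_le_univ (insert x c.support)
    have := card_pos.2 (insert_nonempty x c.support)
    rw [mem_range]
    omega
  calc coprimeOrderCount m α
        = ∑ c ∈ K, #{σ : Perm α | (orderOf σ).Coprime m ∧ σ.cycleOf x = c} := by
        rw [coprimeOrderCount, card_eq_sum_card_fiberwise (f := fun σ => σ.cycleOf x) (t := K)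
          fun σ _ => by simp [K, cycleOf_cycleOf]]
        simp only [filter_filter]
    _ = ∑ c ∈ K, g c := by
        refine sum_congr rfl fun c hc => ?_
        rw [card_coprime_cycleOf_eq m (mem_filter.1 hc).2, coprimeOrderCount_eq_of_card_eq m
          (β := Fin _) (by rw [Fintype.card_fin, Fintype.card_subtype_compl, Fintype.card_coe])]
    _ = ∑ l ∈ range (Fintype.card α), ∑ c ∈ K with #(insert x c.support) - 1 = l, g c :=
        (sum_fiberwise_of_maps_to hlen g).symm
    _ = _ := by
        refine sum_congr rfl fun l hl => ?_
        have hfiber : {c ∈ K | #(insert x c.support) - 1 = l} =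
            ({c | c.cycleOf x = c ∧ #(insert x c.support) = l + 1} : Finset (Perm α)) := by
          ext c
          have := card_pos.2 (insert_nonempty x c.support)
          simp only [K, mem_filter, mem_univ, true_and]
          exact and_congr_right fun _ => by omega
        have hg : ∀ c ∈ ({c | c.cycleOf x = c ∧ #(insert x c.support) = l + 1} :
            Finset (Perm α)),
            g c = if (l + 1).Coprime m then
              coprimeOrderCount m (Fin (Fintype.card α - (l + 1))) else 0 := fun c hc => by
          rw [← (mem_filter.1 hc).2.2]
        rw [hfiber, sum_congr rfl hg, sum_const,
          card_cycleOf_eq_self_card_insert_support x (mem_range.1 hl), smul_eq_mul, mul_ite,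
          mul_zero]

theorem succ_mul_rho_succ_eq_sum (n m : ℕ) :
    ((n : ℝ) + 1) * rho (n + 1) m =
      ∑ l ∈ range (n + 1), if (l + 1).Coprime m then rho (n - l) m else 0 := by
  have hcount := coprimeOrderCount_eq_sum m (Fin (n + 1))
  rw [Fintype.card_fin, Nat.add_sub_cancel] at hcount
  have hlhs :
      ((n : ℝ) + 1) * rho (n + 1) m = coprimeOrderCount m (Fin (n + 1)) / n.factorial := by
    rw [rho_eq_coprimeOrderCount_div, Nat.factorial_succ, Nat.cast_mul, Nat.cast_succ]
    field_simp
  rw [hlhs, hcount, Nat.cast_sum, sum_div]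
  refine sum_congr rfl fun l hl => ?_
  have hle := mem_range_succ_iff.1 hl
  split_ifs
  · have : (n.descFactorial l : ℝ) ≠ 0 := by exact_mod_cast (Nat.descFactorial_pos.2 hle).ne'
    rw [rho_eq_coprimeOrderCount_div, Nat.add_sub_add_right,
      ← Nat.factorial_mul_descFactorial hle, Nat.cast_mul, Nat.cast_mul]
    field_simp
  · simp

theorem apply_succ_eq_of_not_dvd {p : ℕ} {F : ℕ → ℝ}
    (hrec : ∀ n : ℕ, ((n : ℝ) + 1) * F (n + 1) =
      ∑ l ∈ range (n + 1), if p ∣ l + 1 then 0 else F (n - l)) :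
    ∀ n, ¬ p ∣ n + 1 → F (n + 1) = F n := by
  set D : ℕ → ℝ := fun n => ∑ l ∈ range (n + 1), if p ∣ l + 1 then F (n - l) else 0
  have hsplit :
      ∀ n : ℕ, ((n : ℝ) + 1) * F (n + 1) = ∑ l ∈ range (n + 1), F (n - l) - D n := by
    intro n
    rw [hrec, ← sum_sub_distrib]
    refine sum_congr rfl fun l _ => ?_
    split_ifs <;> simp
  intro n
  induction n using Nat.strong_induction_on with
  | _ n ih =>
  intro hn
  cases n with
  | zero => simpa [hn] using hrec 0
  | succ n =>
    have hD : D (n + 1) = D n := by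
      simp only [D]
      rw [sum_range_succ, if_neg hn, add_zero]
      refine sum_congr rfl fun l hl => ?_
      split_ifs with hl'
      · have hle := mem_range_succ_iff.1 hl
        rw [Nat.sub_add_comm hle]
        refine ih (n - l) (by omega) fun h => hn ?_
        have := Nat.dvd_add h hl'
        rwa [show n - l + 1 + (l + 1) = n + 1 + 1 by omega] at this
      · rfl
    have hS : ∑ l ∈ range (n + 1 + 1), F (n + 1 - l) =
        F (n + 1) + ∑ l ∈ range (n + 1), F (n - l) := by
      rw [sum_range_succ', add_comm]
      simp
    have h1 := hsplit (n + 1)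
    have h0 := hsplit n
    rw [hS, hD] at h1
    push_cast at h1
    have hpos : (n : ℝ) + 1 + 1 ≠ 0 := by positivity
    apply mul_left_cancel₀ hpos
    linarith

theorem stmt_12_general (p : ℕ) (hp : p.Prime) (a : ℕ) :
    ∀ i : ℕ, i ≤ p - 1 → rho (a * p + i) p = rho (a * p) p := by
  have hstep : ∀ n, ¬ p ∣ n + 1 → rho (n + 1) p = rho n p := by
    refine apply_succ_eq_of_not_dvd (F := (rho · p)) fun n => ?_
    rw [succ_mul_rho_succ_eq_sum]
    refine sum_congr rfl fun l _ => ?_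
    simp only [Nat.coprime_comm, hp.coprime_iff_not_dvd, ite_not]
  intro i hi
  induction i with
  | zero => rfl
  | succ i ih =>
    have hndvd : ¬ p ∣ a * p + i + 1 := by
      rw [add_assoc, Nat.dvd_add_right (dvd_mul_left p a)]
      exact Nat.not_dvd_of_pos_of_lt i.succ_pos (by omega)
    rw [← add_assoc, hstep _ hndvd, ih (by omega)]

theorem stmt_12 (p : ℕ) (hp : p.Prime) (a : ℕ) (ha : 1 ≤ a) :
    ∀ i : ℕ, i ≤ p - 1 → rho (a * p + i) p = rho (a * p) p :=
  stmt_12_general p hp a
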